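/- arXiv:math/0606157 — 3 statements merged into one kernel-verified Lean document; each statement's English description precedes it below -/
import Mathlib

section
/- Let p, q > 1, φ(t) = log(1+t^q)·t^{p−1} for t ≥ 0, and Φ(t) = ∫₀^t φ(s) ds. Then t·φ(t) ≤ (p+q)·Φ(t) for all t ≥ 0. -/
open Real Set intervalIntegral

/-!
Since `u ↦ log (1 + u)` is concave and vanishes at `0`, `log (1 + u) / u` is nonincreasing.
Hence for `0 < s ≤ t`, `log (1 + s ^ q) ≥ (s / t) ^ q * log (1 + t ^ q)`, i.e. `φ` dominates
`c * s ^ (p + q - 1)` with `c = log (1 + t ^ q) / t ^ q`. Integrating over `[0, t]` gives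
`Φ t ≥ c * t ^ (p + q) / (p + q) = t * φ t / (p + q)`.
-/

theorem ConcaveOn.mul_le_mul_of_map_zero {f : ℝ → ℝ} (hf : ConcaveOn ℝ (Ici 0) f) (hf0 : f 0 = 0)
    {x y : ℝ} (hx : 0 ≤ x) (hxy : x ≤ y) : x * f y ≤ y * f x := by
  rcases hx.eq_or_lt with rfl | hx
  · simp [hf0]
  have hy : 0 < y := hx.trans_le hxy
  have hslope : slope f 0 y ≤ slope f 0 x :=
    hf.slope_anti self_mem_Ici ⟨hx.le, hx.ne'⟩ ⟨hy.le, hy.ne'⟩ hxy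
  simp only [slope_def_field, hf0, sub_zero] at hslope
  rw [div_le_div_iff₀ hy hx] at hslope
  linarith

theorem concaveOn_log_one_add : ConcaveOn ℝ (Ici 0) fun x : ℝ => log (1 + x) :=
  (strictConcaveOn_log_Ioi.concaveOn.translate_right 1).subset
    (fun x (hx : 0 ≤ x) => show 0 < 1 + x by linarith) (convex_Ici 0)

theorem mul_log_one_add_le_mul_log_one_add {x y : ℝ} (hx : 0 ≤ x) (hxy : x ≤ y) :
    x * log (1 + y) ≤ y * log (1 + x) :=
  concaveOn_log_one_add.mul_le_mul_of_map_zero (by simp) hx hxy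

theorem intervalIntegrable_log_one_add_rpow_mul_rpow {p q t : ℝ} (hp : 0 < p) (hq : 0 ≤ q)
    (ht : 0 ≤ t) :
    IntervalIntegrable (fun s => log (1 + s ^ q) * s ^ (p - 1)) MeasureTheory.volume 0 t := by
  refine (intervalIntegrable_rpow' (by linarith : -1 < p - 1)).continuousOn_mul ?_
  rw [uIcc_of_le ht]
  refine ContinuousOn.log (continuousOn_const.add ?_) fun s hs => ?_
  · exact fun s _ => (continuousAt_rpow_const s q (Or.inr hq)).continuousWithinAt
  · have : 0 ≤ s ^ q := rpow_nonneg hs.1 q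
    positivity

theorem div_rpow_mul_rpow_le_log_one_add_rpow_mul_rpow {p q s t : ℝ} (hq : 0 < q)
    (hs : 0 < s) (hst : s ≤ t) :
    log (1 + t ^ q) / t ^ q * s ^ (p + q - 1) ≤ log (1 + s ^ q) * s ^ (p - 1) := by
  have htq : 0 < t ^ q := rpow_pos_of_pos (hs.trans_le hst) q
  have hlog : s ^ q * log (1 + t ^ q) ≤ t ^ q * log (1 + s ^ q) :=
    mul_log_one_add_le_mul_log_one_add (rpow_nonneg hs.le q) (rpow_le_rpow hs.le hst hq.le)
  have hlog' : log (1 + t ^ q) / t ^ q * s ^ q ≤ log (1 + s ^ q) := by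
    rw [div_mul_eq_mul_div, div_le_iff₀ htq]
    linarith
  calc log (1 + t ^ q) / t ^ q * s ^ (p + q - 1)
      = log (1 + t ^ q) / t ^ q * s ^ q * s ^ (p - 1) := by
        rw [show p + q - 1 = q + (p - 1) by ring, rpow_add hs, mul_assoc]
    _ ≤ log (1 + s ^ q) * s ^ (p - 1) := by gcongr

theorem mul_log_one_add_rpow_mul_rpow_le_integral {p q t : ℝ} (hp : 0 < p) (hq : 0 < q)
    (ht : 0 ≤ t) :
    t * (log (1 + t ^ q) * t ^ (p - 1)) ≤
      (p + q) * ∫ s in (0:ℝ)..t, log (1 + s ^ q) * s ^ (p - 1) := by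
  rcases ht.eq_or_lt with rfl | ht
  · simp
  set c := log (1 + t ^ q) / t ^ q
  have hlower : ∫ s in (0:ℝ)..t, c * s ^ (p + q - 1) = c * (t ^ (p + q) / (p + q)) := by
    rw [integral_const_mul, integral_rpow (Or.inl (by linarith)),
      sub_add_cancel, zero_rpow (by linarith), sub_zero]
  have hmono : ∫ s in (0:ℝ)..t, c * s ^ (p + q - 1) ≤
      ∫ s in (0:ℝ)..t, log (1 + s ^ q) * s ^ (p - 1) :=
    integral_mono_on_of_le_Ioo ht.le
      ((intervalIntegrable_rpow' (by linarith)).const_mul c)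
      (intervalIntegrable_log_one_add_rpow_mul_rpow hp hq.le ht.le)
      fun s hs => div_rpow_mul_rpow_le_log_one_add_rpow_mul_rpow hq hs.1 hs.2.le
  calc t * (log (1 + t ^ q) * t ^ (p - 1)) = (p + q) * (c * (t ^ (p + q) / (p + q))) := by
        rw [rpow_add ht, rpow_sub_one ht.ne']
        simp only [c]
        field_simp
    _ ≤ _ := by
        rw [← hlower]
        exact mul_le_mul_of_nonneg_left hmono (by linarith)

theorem stmt_10 (p q : ℝ) (hp : 1 < p) (hq : 1 < q) :
    ∀ t : ℝ, 0 ≤ t →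
      t * (Real.log (1 + t ^ q) * t ^ (p - 1)) ≤
        (p + q) * ∫ s in (0:ℝ)..t, Real.log (1 + s ^ q) * s ^ (p - 1) :=
  fun _ ht => mul_log_one_add_rpow_mul_rpow_le_integral (by linarith) (by linarith) ht
end

section
/- Let p, q > 1, Φ(t) = ∫₀^t log(1+s^q)·s^{p−1} ds for t ≥ 0, and let γ ≥ 1 satisfy γ < (Np−N+p)/(N−p) where N > p + q. Then lim_{τ→∞} τ^{N(γ+1)/(N+γ+1)} / Φ(τ) = 0. -/
open Real Filter

theorem stmt_16 (p q N γ : ℝ) (hp : 1 < p) (hq : 1 < q) (hN : p + q < N)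
    (hγ1 : 1 ≤ γ) (hγ2 : γ < (N * p - N + p) / (N - p)) :
    Filter.Tendsto
      (fun τ : ℝ =>
        τ ^ (N * (γ + 1) / (N + γ + 1))
          / ∫ s in (0:ℝ)..τ, Real.log (1 + s ^ q) * s ^ (p - 1))
      Filter.atTop (nhds 0) := by
  set α := N * (γ + 1) / (N + γ + 1) with hαdef
  have hp0 : (0:ℝ) < p := by linarith
  have hq0 : (0:ℝ) < q := by linarith
  have hNp : p < N := by linarith
  have hden : (0:ℝ) < N + γ + 1 := by linarith
  have hαp : α < p := by
    rw [hαdef, div_lt_iff₀ hden]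
    have h := (lt_div_iff₀ (by linarith : (0:ℝ) < N - p)).mp hγ2
    nlinarith
  set F : ℝ → ℝ := fun s => Real.log (1 + s ^ q) * s ^ (p - 1) with hF
  set c : ℝ := Real.log 2 / p with hc
  have hc0 : 0 < c := div_pos (Real.log_pos one_lt_two) hp0
  -- continuity on Ici 0
  have hco : ContinuousOn F (Set.Ici 0) := by
    apply ContinuousOn.mul
    · apply ContinuousOn.log
      · exact continuousOn_const.add (continuousOn_id.rpow_const (fun x _ => Or.inr hq0.le))
      · intro x hx
        have : (0:ℝ) ≤ x ^ q := Real.rpow_nonneg hx q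
        linarith
    · exact continuousOn_id.rpow_const (fun x _ => Or.inr (by linarith))
  have hint : ∀ a b : ℝ, 0 ≤ a → 0 ≤ b →
      IntervalIntegrable F MeasureTheory.volume a b := by
    intro a b ha hb
    apply (hco.mono ?_).intervalIntegrable
    intro x hx
    rw [Set.mem_uIcc] at hx
    rcases hx with ⟨h1, _⟩ | ⟨h1, _⟩ <;> exact le_trans (by linarith) h1
  -- key lower bound on the integral
  have key : ∀ τ : ℝ, 1 < τ → c * (τ ^ p - 1) ≤ ∫ s in (0:ℝ)..τ, F s := by
    intro τ hτ
    have hτ0 : (0:ℝ) < τ := by linarith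
    have hsplit : (∫ s in (0:ℝ)..1, F s) + (∫ s in (1:ℝ)..τ, F s) = ∫ s in (0:ℝ)..τ, F s :=
      intervalIntegral.integral_add_adjacent_intervals
        (hint 0 1 le_rfl zero_le_one) (hint 1 τ zero_le_one hτ0.le)
    have h01 : 0 ≤ ∫ s in (0:ℝ)..1, F s := by
      apply intervalIntegral.integral_nonneg zero_le_one
      intro x hx
      have hx0 : (0:ℝ) ≤ x := hx.1
      have h1 : (0:ℝ) ≤ Real.log (1 + x ^ q) := by
        apply Real.log_nonneg
        have : (0:ℝ) ≤ x ^ q := Real.rpow_nonneg hx0 q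
        linarith
      exact mul_nonneg h1 (Real.rpow_nonneg hx0 _)
    have hint2 : IntervalIntegrable (fun u : ℝ => Real.log 2 * u ^ (p - 1))
        MeasureTheory.volume 1 τ :=
      (intervalIntegral.intervalIntegrable_rpow' (by linarith)).const_mul _
    have h1τ : (∫ s in (1:ℝ)..τ, Real.log 2 * s ^ (p - 1)) ≤ ∫ s in (1:ℝ)..τ, F s := by
      apply intervalIntegral.integral_mono_on hτ.le hint2 (hint 1 τ zero_le_one hτ0.le)
      intro x hx
      have hx1 : (1:ℝ) ≤ x := hx.1
      have hx0 : (0:ℝ) ≤ x := by linarith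
      apply mul_le_mul_of_nonneg_right ?_ (Real.rpow_nonneg hx0 _)
      apply Real.log_le_log (by norm_num)
      have : (1:ℝ) ≤ x ^ q := Real.one_le_rpow hx1 hq0.le
      linarith
    have hval : (∫ s in (1:ℝ)..τ, Real.log 2 * s ^ (p - 1)) = c * (τ ^ p - 1) := by
      rw [intervalIntegral.integral_const_mul, integral_rpow (Or.inl (by linarith))]
      have hpe : p - 1 + 1 = p := by ring
      rw [hpe, Real.one_rpow, hc]
      ring
    rw [← hsplit]
    rw [hval] at h1τ
    linarith
  -- the dominating function and its limit
  have hg : Tendsto (fun τ : ℝ => τ ^ α / (c * (τ ^ p - 1))) atTop (nhds 0) := by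
    have hnum : Tendsto (fun τ : ℝ => τ ^ (α - p)) atTop (nhds 0) := by
      have := tendsto_rpow_neg_atTop (by linarith : 0 < p - α)
      convert this using 2 with τ
      ring_nf
    have hden2 : Tendsto (fun τ : ℝ => 1 - τ ^ (-p)) atTop (nhds (1 - 0)) :=
      tendsto_const_nhds.sub (tendsto_rpow_neg_atTop hp0)
    have hh : Tendsto (fun τ : ℝ => (1 / c) * (τ ^ (α - p) / (1 - τ ^ (-p)))) atTop
        (nhds ((1 / c) * (0 / (1 - 0)))) :=
      (hnum.div hden2 (by norm_num)).const_mul _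
    rw [show (1 / c) * ((0:ℝ) / (1 - 0)) = 0 by norm_num] at hh
    apply hh.congr'
    filter_upwards [eventually_gt_atTop 1] with τ hτ
    have hτ0 : (0:ℝ) < τ := by linarith
    have h1 : τ ^ p * τ ^ (-p) = 1 := by
      rw [← Real.rpow_add hτ0]; simp
    have h2 : τ ^ α = τ ^ (α - p) * τ ^ p := by
      rw [← Real.rpow_add hτ0]; ring_nf
    have h3 : τ ^ p - 1 = τ ^ p * (1 - τ ^ (-p)) := by
      rw [mul_sub, h1, mul_one]
    have hτp : τ ^ p ≠ 0 := (Real.rpow_pos_of_pos hτ0 p).ne'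
    have h4 : τ ^ (-p) < 1 := Real.rpow_lt_one_of_one_lt_of_neg hτ (by linarith)
    have h5 : (1:ℝ) - τ ^ (-p) ≠ 0 := by linarith
    rw [h2, h3]
    field_simp
  -- squeeze
  apply tendsto_of_tendsto_of_tendsto_of_le_of_le' tendsto_const_nhds hg
  · filter_upwards [eventually_gt_atTop 1] with τ hτ
    have hτ0 : (0:ℝ) < τ := by linarith
    have hΦ : 0 ≤ ∫ s in (0:ℝ)..τ, F s := by
      have h1 : (0:ℝ) < τ ^ p := Real.rpow_pos_of_pos hτ0 p
      have h2 : (1:ℝ) < τ ^ p := Real.one_lt_rpow_iff_of_pos hτ0 |>.mpr (Or.inl ⟨hτ, hp0⟩)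
      nlinarith [key τ hτ]
    exact div_nonneg (Real.rpow_nonneg hτ0.le _) hΦ
  · filter_upwards [eventually_gt_atTop 1] with τ hτ
    have hτ0 : (0:ℝ) < τ := by linarith
    have h2 : (1:ℝ) < τ ^ p := Real.one_lt_rpow_iff_of_pos hτ0 |>.mpr (Or.inl ⟨hτ, hp0⟩)
    have hpos : 0 < c * (τ ^ p - 1) := by nlinarith
    exact div_le_div_of_nonneg_left (Real.rpow_nonneg hτ0.le _) hpos (key τ hτ) |>.trans_eq rfl
      |>.trans_eq rfl
end

section
/- Let p, q > 1 with p + q < N (N real), and set Φ(t) = ∫₀^t log(1+s^q)·s^{p−1} ds. Then the integral ∫₀^1 Φ^{-1}(s)/s^{(N+1)/N} ds converges (is finite), where Φ^{-1} is the inverse of Φ restricted to [0,∞). -/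
/-!
Since `log (1 + s ^ q) ≥ s ^ q / (1 + M ^ q)` on `[0, M]`, integrating gives
`Φ t ≥ t ^ (p + q) / ((1 + M ^ q) (p + q))` for `0 ≤ t ≤ M`. Taking `M = T` with `Φ T ≥ 1`,
the inverse satisfies `Φ⁻¹ s ≤ C s ^ (1 / (p + q))` on `(0, 1]`, so the integrand is dominated
by `C s ^ (1 / (p + q) - 1 - 1 / N)`, whose exponent exceeds `-1` exactly because `N > p + q`.
Measurability comes for free: `Φ⁻¹` is monotone.
-/

open Real MeasureTheory Set Filter

theorem Set.LeftInvOn.mapsTo_Icc {α δ : Type*} [ConditionallyCompleteLinearOrder α]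
    [TopologicalSpace α] [OrderTopology α] [DenselyOrdered α] [LinearOrder δ]
    [TopologicalSpace δ] [OrderClosedTopology δ] {f : α → δ} {g : δ → α} {a b : α}
    (hg : LeftInvOn g f (Icc a b)) (hab : a ≤ b) (hf : ContinuousOn f (Icc a b)) :
    MapsTo g (Icc (f a) (f b)) (Icc a b) := by
  intro s hs
  obtain ⟨t, ht, rfl⟩ := intermediate_value_Icc hab hf hs
  rwa [hg ht]

theorem MonotoneOn.monotoneOn_of_rightInvOn {α β : Type*} [LinearOrder α] [PartialOrder β]
    {f : α → β} {g : β → α} {s : Set α} {t : Set β} (hf : MonotoneOn f s) (hg : MapsTo g t s)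
    (hfg : RightInvOn g f t) : MonotoneOn g t := by
  intro x hx y hy hxy
  by_contra! hlt
  have hyx : y ≤ x := hfg hx ▸ hfg hy ▸ hf (hg hy) (hg hx) hlt.le
  exact hlt.ne (congrArg g (le_antisymm hxy hyx)).symm

theorem integrableOn_Ioc_zero_one_of_norm_le_rpow {f : ℝ → ℝ} {C r : ℝ} (hr : -1 < r)
    (hf : AEStronglyMeasurable f (volume.restrict (Ioc 0 1)))
    (hbound : ∀ s ∈ Ioc (0 : ℝ) 1, ‖f s‖ ≤ C * s ^ r) :
    IntegrableOn f (Ioc 0 1) := by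
  have hdom : IntegrableOn (fun s : ℝ => C * s ^ r) (Ioc 0 1) := by
    rw [← intervalIntegrable_iff_integrableOn_Ioc_of_le zero_le_one]
    exact (intervalIntegral.intervalIntegrable_rpow' hr).const_mul C
  exact hdom.mono' hf ((ae_restrict_iff' measurableSet_Ioc).mpr (.of_forall hbound))

noncomputable def phiIntegrand (p q s : ℝ) : ℝ := log (1 + s ^ q) * s ^ (p - 1)

noncomputable def phi (p q t : ℝ) : ℝ := ∫ s in (0 : ℝ)..t, phiIntegrand p q s

section

variable {p q : ℝ}

theorem phiIntegrand_nonneg {s : ℝ} (hs : 0 ≤ s) : 0 ≤ phiIntegrand p q s :=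
  mul_nonneg (log_nonneg (le_add_of_nonneg_right (rpow_nonneg hs q))) (rpow_nonneg hs _)

theorem continuousOn_phiIntegrand (hp : 1 ≤ p) (hq : 0 ≤ q) :
    ContinuousOn (phiIntegrand p q) (Ici 0) := by
  refine ContinuousOn.mul ?_ (continuous_rpow_const (by linarith)).continuousOn
  refine (continuous_const.add (continuous_rpow_const hq)).continuousOn.log fun s hs => ?_
  exact (add_pos_of_pos_of_nonneg one_pos (rpow_nonneg hs q)).ne'

theorem intervalIntegrable_phiIntegrand (hp : 1 ≤ p) (hq : 0 ≤ q) {a b : ℝ} (ha : 0 ≤ a)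
    (hb : 0 ≤ b) : IntervalIntegrable (phiIntegrand p q) volume a b :=
  ((continuousOn_phiIntegrand hp hq).mono fun _ hx =>
    le_min ha hb |>.trans hx.1).intervalIntegrable

theorem rpow_div_le_phiIntegrand (hp : 1 ≤ p) (hq : 0 ≤ q) {s M : ℝ} (hs : 0 ≤ s)
    (hsM : s ≤ M) : s ^ (p + q - 1) / (1 + M ^ q) ≤ phiIntegrand p q s := by
  have hsq : 0 ≤ s ^ q := rpow_nonneg hs q
  have hMq : 0 ≤ M ^ q := rpow_nonneg (hs.trans hsM) q
  have hlog : s ^ q / (1 + M ^ q) ≤ log (1 + s ^ q) :=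
    calc s ^ q / (1 + M ^ q) ≤ 2 * s ^ q / (s ^ q + 2) := by
          have := rpow_le_rpow hs hsM hq
          rw [div_le_div_iff₀ (by positivity) (by positivity)]
          nlinarith
      _ ≤ log (1 + s ^ q) := le_log_one_add_of_nonneg hsq
  rw [show p + q - 1 = q + (p - 1) by ring, rpow_add_of_nonneg hs hq (by linarith),
    mul_div_right_comm]
  exact mul_le_mul_of_nonneg_right hlog (rpow_nonneg hs _)

theorem phi_zero : phi p q 0 = 0 := intervalIntegral.integral_same

theorem monotoneOn_phi (hp : 1 ≤ p) (hq : 0 ≤ q) : MonotoneOn (phi p q) (Ici 0) :=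
  fun _ ha _ hb hab => intervalIntegral.integral_mono_interval le_rfl ha hab
    ((ae_restrict_iff' measurableSet_Ioc).mpr (.of_forall fun _ hx => phiIntegrand_nonneg hx.1.le))
    (intervalIntegrable_phiIntegrand hp hq le_rfl hb)

theorem continuousOn_phi (hp : 1 ≤ p) (hq : 0 ≤ q) {b : ℝ} (hb : 0 ≤ b) :
    ContinuousOn (phi p q) (Icc 0 b) := by
  rw [← uIcc_of_le hb]
  exact intervalIntegral.continuousOn_primitive_interval'
    (intervalIntegrable_phiIntegrand hp hq le_rfl hb) left_mem_uIcc

theorem rpow_div_le_phi (hp : 1 ≤ p) (hq : 0 ≤ q) {t M : ℝ} (ht : 0 ≤ t) (htM : t ≤ M) :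
    t ^ (p + q) / ((1 + M ^ q) * (p + q)) ≤ phi p q t := by
  have hpq : 0 < p + q := by linarith
  have hprimitive : ∫ s in (0 : ℝ)..t, s ^ (p + q - 1) / (1 + M ^ q)
      = t ^ (p + q) / ((1 + M ^ q) * (p + q)) := by
    rw [intervalIntegral.integral_div, integral_rpow (Or.inl (by linarith)),
      sub_add_cancel, zero_rpow hpq.ne', sub_zero, div_div, mul_comm (p + q)]
  rw [← hprimitive]
  exact intervalIntegral.integral_mono_on ht
    ((intervalIntegral.intervalIntegrable_rpow' (by linarith)).div_const _)
    (intervalIntegrable_phiIntegrand hp hq le_rfl ht)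
    fun s hs => rpow_div_le_phiIntegrand hp hq hs.1 (hs.2.trans htM)

theorem le_rpow_mul_phi (hp : 1 ≤ p) (hq : 0 ≤ q) {t M : ℝ} (ht : 0 ≤ t) (htM : t ≤ M) :
    t ≤ ((1 + M ^ q) * (p + q) * phi p q t) ^ (p + q)⁻¹ := by
  have hc : 0 < (1 + M ^ q) * (p + q) := by
    have := rpow_nonneg (ht.trans htM) q
    have : 0 < p + q := by linarith
    positivity
  have hphi : 0 ≤ phi p q t :=
    phi_zero (p := p) (q := q) ▸ monotoneOn_phi hp hq self_mem_Ici ht ht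
  rw [le_rpow_inv_iff_of_pos ht (by positivity) (by linarith), ← div_le_iff₀' hc]
  exact rpow_div_le_phi hp hq ht htM

theorem exists_one_le_phi (hp : 1 ≤ p) (hq : 0 ≤ q) : ∃ T, 0 ≤ T ∧ 1 ≤ phi p q T := by
  have hpq : 0 < p + q := by linarith
  have htendsto : Tendsto (fun T : ℝ => T ^ p / (2 * (p + q))) atTop atTop :=
    (tendsto_rpow_atTop (by linarith)).atTop_div_const (by positivity)
  obtain ⟨T, hT, hT1⟩ := ((htendsto.eventually_ge_atTop 1).and (eventually_ge_atTop 1)).exists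
  refine ⟨T, by linarith, hT.trans (le_trans ?_ (rpow_div_le_phi hp hq (by linarith) le_rfl))⟩
  -- for `T ≥ 1` we have `1 + T ^ q ≤ 2 T ^ q`
  have hTq : 1 ≤ T ^ q := one_le_rpow hT1 hq
  have hTp : 0 ≤ T ^ p := rpow_nonneg (by linarith) p
  rw [rpow_add (by linarith), div_le_div_iff₀ (by positivity) (by positivity)]
  nlinarith [mul_nonneg (mul_nonneg hTp hpq.le) (sub_nonneg.mpr hTq)]

end

theorem stmt_18 (p q N : ℝ) (hp : 1 < p) (hq : 1 < q) (hN : p + q < N)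
    (Φ Φinv : ℝ → ℝ)
    (hΦ : ∀ t, Φ t = ∫ s in (0:ℝ)..t, Real.log (1 + s ^ q) * s ^ (p - 1))
    (hinv1 : ∀ t ∈ Set.Ici (0:ℝ), Φinv (Φ t) = t)
    (hinv2 : ∀ s ∈ Set.Ici (0:ℝ), Φ (Φinv s) = s) :
    MeasureTheory.IntegrableOn
      (fun s : ℝ => Φinv s / s ^ ((N + 1) / N)) (Set.Ioc 0 1) := by
  obtain rfl : Φ = phi p q := funext hΦ
  have hp' : 1 ≤ p := hp.le
  have hq' : 0 ≤ q := by linarith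
  obtain ⟨T, hT, hT1⟩ := exists_one_le_phi hp' hq'
  have hmaps : MapsTo Φinv (Icc 0 1) (Icc 0 T) :=
    (LeftInvOn.mapsTo_Icc (fun t ht => hinv1 t ht.1) hT (continuousOn_phi hp' hq' hT)).mono_left
      (Icc_subset_Icc phi_zero.le hT1)
  have hmono : MonotoneOn Φinv (Ioc 0 1) :=
    (monotoneOn_phi hp' hq').monotoneOn_of_rightInvOn
      (fun s hs => (hmaps (Ioc_subset_Icc_self hs)).1) fun s hs => hinv2 s hs.1.le
  set α := (p + q)⁻¹
  refine integrableOn_Ioc_zero_one_of_norm_le_rpow (C := ((1 + T ^ q) * (p + q)) ^ α)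
    (r := α - (N + 1) / N) ?_ ?_ fun s hs => ?_
  · have hαN : N⁻¹ < α := inv_strictAnti₀ (by linarith) hN
    have he : (N + 1) / N = 1 + N⁻¹ := by rw [add_div, div_self (by linarith), one_div]
    linarith
  · exact ((aemeasurable_restrict_of_monotoneOn measurableSet_Ioc hmono).div
      (measurable_id.pow_const _).aemeasurable).aestronglyMeasurable
  · obtain ⟨h0, hT'⟩ := hmaps (Ioc_subset_Icc_self hs)
    have hinv_le := le_rpow_mul_phi hp' hq' h0 hT'
    rw [hinv2 s hs.1.le, mul_rpow (by positivity) hs.1.le] at hinv_le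
    have hse : 0 < s ^ ((N + 1) / N) := rpow_pos_of_pos hs.1 _
    rw [norm_of_nonneg (div_nonneg h0 hse.le), rpow_sub hs.1, ← mul_div_assoc]
    exact div_le_div_of_nonneg_right hinv_le hse.le
end
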